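/- arXiv:1309.5322 — 3 statements merged into one kernel-verified Lean document; each statement's English description precedes it below -/
import Mathlib

section
/- For every real t and k > 0, the 2×2 matrix T = exp(-iπ/4) 𝓔_k(t) [[1, i e^{-πt}], [i e^{-πt}, 1]], where 𝓔_k(t) = (2π)^{-1/2} Γ(1/2+it) exp(t(π/2 - i ln k)), is unitary. -/
/-!
Up to the phase `e^{-iπ/4}`, `T = 𝓔 M` with `M Mᴴ = (1 + e^{-2πt}) I`, so unitarity amounts to
`|𝓔|² (1 + e^{-2πt}) = 1`. The reflection formula gives `|Γ(1/2 + it)|² = π / cosh πt`, and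
`|e^{t(π/2 - i log k)}|² = e^{πt}`, hence `|𝓔|² = e^{πt} / (2 cosh πt) = 1 / (1 + e^{-2πt})`.
-/

open Complex

theorem Matrix.smul_mem_unitaryGroup {n R : Type*} [Fintype n] [DecidableEq n] [CommRing R]
    [StarRing R] {M : Matrix n n R} {r c : R} (hM : M * star M = r • 1) (hc : c * star c * r = 1) :
    c • M ∈ Matrix.unitaryGroup n R := by
  rw [Matrix.mem_unitaryGroup_iff, star_smul, Matrix.smul_mul, Matrix.mul_smul, smul_smul, hM,
    smul_smul, hc, one_smul]

theorem Complex.norm_Gamma_one_half_add_mul_I_sq (t : ℝ) :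
    ‖Gamma (1 / 2 + t * I)‖ ^ 2 = Real.pi / Real.cosh (Real.pi * t) := by
  -- `conj (Γ s) = Γ (1 - s)` on the critical line, so the reflection formula applies.
  have hconj : starRingEnd ℂ (1 / 2 + t * I) = 1 - (1 / 2 + t * I) := by
    simp only [map_add, map_mul, map_div₀, map_one, map_ofNat, conj_ofReal, conj_I]
    ring
  have hsin : sin (Real.pi * (1 / 2 + t * I)) = cosh (Real.pi * t) := by
    rw [← cos_mul_I, ← sin_add_pi_div_two]
    ring_nf
  apply ofReal_injective
  rw [ofReal_pow, ← mul_conj', ← Gamma_conj, hconj, Gamma_mul_Gamma_one_sub, hsin]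
  norm_cast

theorem Real.exp_mul_one_add_exp_neg_sq (x : ℝ) : exp x * (1 + exp (-x) ^ 2) = 2 * cosh x := by
  rw [cosh_eq, exp_neg]
  field_simp

theorem Matrix.mul_star_one_I_I_one (a : ℝ) :
    !![1, I * a; I * a, 1] * star !![1, I * a; I * a, 1] = ((1 + a ^ 2 : ℝ) : ℂ) • 1 := by
  ext i j
  fin_cases i <;> fin_cases j <;>
    simp [Matrix.mul_apply, Fin.sum_univ_two, conj_ofReal] <;> ring_nf <;> simp [I_sq]

/-- The paper's `𝓔_k(t)`. -/
noncomputable def transferPrefactor (t k : ℝ) : ℂ :=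
  (((2 * Real.pi) ^ (-(1 : ℝ) / 2) : ℝ) : ℂ) * Gamma (1 / 2 + t * I) *
    exp (t * ((Real.pi / 2 : ℝ) - I * (Real.log k : ℂ)))

theorem norm_transferPrefactor_sq (t k : ℝ) :
    ‖transferPrefactor t k‖ ^ 2 = Real.exp (Real.pi * t) / (2 * Real.cosh (Real.pi * t)) := by
  have hpow : ((2 * Real.pi) ^ (-(1 : ℝ) / 2)) ^ 2 = (2 * Real.pi)⁻¹ := by
    rw [← Real.rpow_natCast, ← Real.rpow_mul (by positivity)]
    norm_num [Real.rpow_neg_one]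
  have hre : ((t : ℂ) * ((Real.pi / 2 : ℝ) - I * (Real.log k : ℂ))).re = t * (Real.pi / 2) := by
    simp
  have hexp : Real.exp (t * (Real.pi / 2)) ^ 2 = Real.exp (Real.pi * t) := by
    rw [← Real.exp_nat_mul]
    ring_nf
  rw [transferPrefactor, norm_mul, norm_mul, mul_pow, mul_pow, norm_real, Real.norm_eq_abs, sq_abs,
    hpow, norm_Gamma_one_half_add_mul_I_sq, norm_exp, hre, hexp]
  field_simp

theorem stmt6_general (t k : ℝ) :
    (Complex.exp (-(Real.pi / 4 : ℝ) * Complex.I) *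
        ((((2 * Real.pi) ^ (-(1 : ℝ) / 2) : ℝ) : ℂ) *
          Complex.Gamma (1 / 2 + (t : ℂ) * Complex.I) *
          Complex.exp ((t : ℂ) * ((Real.pi / 2 : ℝ) - Complex.I * (Real.log k : ℂ))))) •
      (!![1, Complex.I * (Real.exp (-Real.pi * t) : ℝ);
          Complex.I * (Real.exp (-Real.pi * t) : ℝ), 1] : Matrix (Fin 2) (Fin 2) ℂ)
      ∈ Matrix.unitaryGroup (Fin 2) ℂ := by
  refine Matrix.smul_mem_unitaryGroup (Matrix.mul_star_one_I_I_one _) ?_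
  have hphase : ‖exp (-(Real.pi / 4 : ℝ) * I)‖ = 1 := by
    rw [← ofReal_neg]; exact norm_exp_ofReal_mul_I _
  have hnorm : ‖transferPrefactor t k‖ ^ 2 * (1 + Real.exp (-Real.pi * t) ^ 2) = 1 := by
    rw [norm_transferPrefactor_sq, div_mul_eq_mul_div, neg_mul, Real.exp_mul_one_add_exp_neg_sq,
      div_self (by positivity)]
  rw [star_def, mul_conj', norm_mul, hphase, one_mul, ← ofReal_pow, ← ofReal_mul]
  exact (congrArg ofReal hnorm).trans ofReal_one

/-- The transfer matrix `T = e^{-iπ/4} 𝓔_k(t) [[1, i e^{-πt}],[i e^{-πt}, 1]]`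
at a hyperbolic singularity is unitary. -/
theorem stmt6 (t k : ℝ) (hk : 0 < k) :
    (Complex.exp (-(Real.pi / 4 : ℝ) * Complex.I) *
        ((((2 * Real.pi) ^ (-(1 : ℝ) / 2) : ℝ) : ℂ) *
          Complex.Gamma (1 / 2 + (t : ℂ) * Complex.I) *
          Complex.exp ((t : ℂ) * ((Real.pi / 2 : ℝ) - Complex.I * (Real.log k : ℂ))))) •
      (!![1, Complex.I * (Real.exp (-Real.pi * t) : ℝ);
          Complex.I * (Real.exp (-Real.pi * t) : ℝ), 1] : Matrix (Fin 2) (Fin 2) ℂ)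
      ∈ Matrix.unitaryGroup (Fin 2) ℂ :=
  stmt6_general t k
end

section
/- Let A be the (2k)×(2k) real symmetric circulant-like tridiagonal matrix (with corner entries) with diagonal entries 2cos(ℓπ/k), ℓ = 0,…,2k−1, off-diagonal entries 1 on the first super- and sub-diagonal, and entries 1 in positions (1,2k) and (2k,1). Then the spectrum of A is symmetric about 0: if λ is an eigenvalue of A then so is −λ. -/
/-!
Let `S` be the signed shift `(S v)_ℓ = (-1)^ℓ v_{ℓ+k}` on `ℝ^{ℤ/2kℤ}`. Shifting by `k` turns
`cos (ℓπ/k)` into `-cos (ℓπ/k)` and leaves the cycle adjacency invariant, while the alternating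
sign flips along every edge of the even cycle. Hence `A S = -S A`, and `S` maps a
`λ`-eigenvector of `A` to a `-λ`-eigenvector.
-/

open Matrix SimpleGraph Real

namespace Matrix

variable {n R : Type*} [CommRing R]

/-- `A` anticommutes with the signed permutation matrix `S i j = if j = e i then σ i else 0`. -/
def AnticommutesSignedPerm (A : Matrix n n R) (σ : n → R) (e : n ≃ n) : Prop :=
  ∀ i j, A i j * σ j = -(σ i * A (e i) (e j))

namespace AnticommutesSignedPerm

variable {A B : Matrix n n R} {σ : n → R} {e : n ≃ n}

theorem add (hA : A.AnticommutesSignedPerm σ e) (hB : B.AnticommutesSignedPerm σ e) :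
    (A + B).AnticommutesSignedPerm σ e := fun i j => by
  simp only [add_apply, add_mul, mul_add, neg_add, hA i j, hB i j]

theorem mulVec_eq_neg_smul [Fintype n] (hA : A.AnticommutesSignedPerm σ e) {lam : R} {v : n → R}
    (hv : A *ᵥ v = lam • v) :
    A *ᵥ (fun i => σ i * v (e i)) = (-lam) • fun i => σ i * v (e i) := by
  ext i
  calc ∑ j, A i j * (σ j * v (e j))
      = -σ i * ∑ j, A (e i) (e j) * v (e j) := by
        rw [Finset.mul_sum]
        exact Finset.sum_congr rfl fun j _ => by rw [← mul_assoc, hA i j]; ring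
    _ = -σ i * (A *ᵥ v) (e i) := by
        rw [Equiv.sum_comp e fun j => A (e i) j * v j]; rfl
    _ = ((-lam) • fun i => σ i * v (e i)) i := by
        rw [hv]; simp only [Pi.smul_apply, smul_eq_mul]; ring

theorem exists_mulVec_eq_neg_smul [Fintype n] [NoZeroDivisors R]
    (hA : A.AnticommutesSignedPerm σ e) (hσ : ∀ i, σ i ≠ 0) {lam : R}
    (hlam : ∃ v : n → R, v ≠ 0 ∧ A *ᵥ v = lam • v) :
    ∃ w : n → R, w ≠ 0 ∧ A *ᵥ w = (-lam) • w := by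
  obtain ⟨v, hv, hAv⟩ := hlam
  refine ⟨fun i => σ i * v (e i), fun hw => hv ?_, hA.mulVec_eq_neg_smul hAv⟩
  funext j
  simpa [hσ] using congrFun hw (e.symm j)

end AnticommutesSignedPerm

theorem anticommutesSignedPerm_diagonal [DecidableEq n] {d σ : n → R} {e : n ≃ n}
    (hd : ∀ i, d (e i) = -d i) :
    (diagonal d).AnticommutesSignedPerm σ e := fun i j => by
  by_cases hij : i = j
  · subst hij
    simp only [diagonal_apply_eq, hd]
    ring
  · simp [diagonal_apply_ne _ hij, diagonal_apply_ne _ (e.injective.ne hij)]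

end Matrix

theorem neg_one_pow_mod_of_even {R : Type*} [Ring R] {n : ℕ} (hn : Even n) (m : ℕ) :
    (-1 : R) ^ (m % n) = (-1) ^ m := by
  rw [neg_one_pow_eq_pow_mod_two, Nat.mod_mod_of_dvd m (even_iff_two_dvd.mp hn),
    ← neg_one_pow_eq_pow_mod_two]

theorem Fin.val_eq_val_add_one_mod_iff {n : ℕ} [NeZero n] {i j : Fin n} :
    (j : ℕ) = ((i : ℕ) + 1) % n ↔ j = i + 1 := by
  rw [Fin.ext_iff, Fin.val_add, Fin.val_one', Nat.add_mod_mod]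

namespace SimpleGraph

theorem cycleGraph_adj_iff_eq_add_one {n : ℕ} [NeZero n] (hn : 1 < n) {u v : Fin n} :
    (cycleGraph n).Adj u v ↔ v = u + 1 ∨ u = v + 1 := by
  have hone : ∀ w : Fin n, (w : ℕ) = 1 ↔ w = 1 := fun w => by
    rw [Fin.ext_iff, Fin.val_one', Nat.mod_eq_of_lt hn]
  rw [cycleGraph_adj', hone, hone, sub_eq_iff_eq_add', sub_eq_iff_eq_add', add_comm u,
    add_comm v, or_comm]

theorem cycleGraph_adj_add_right {n : ℕ} [NeZero n] {u v : Fin n} (c : Fin n) :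
    (cycleGraph n).Adj (u + c) (v + c) ↔ (cycleGraph n).Adj u v := by
  simp only [cycleGraph_adj', add_sub_add_right_eq_sub]

theorem neg_one_pow_val_of_cycleGraph_adj {R : Type*} [Ring R] {n : ℕ} [NeZero n] (hn : Even n)
    {u v : Fin n} (h : (cycleGraph n).Adj u v) :
    (-1 : R) ^ (v : ℕ) = -(-1) ^ (u : ℕ) := by
  have step : ∀ a b : Fin n, ((a - b : Fin n) : ℕ) = 1 → (-1 : R) ^ (a : ℕ) = -(-1) ^ (b : ℕ) := by
    intro a b hab
    rw [← sub_add_cancel a b, Fin.val_add, hab, add_comm, neg_one_pow_mod_of_even hn, pow_succ,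
      mul_neg_one]
  rcases cycleGraph_adj'.mp h with h | h
  · rw [step u v h, neg_neg]
  · exact step v u h

theorem anticommutesSignedPerm_adjMatrix_cycleGraph {R : Type*} [CommRing R] {n : ℕ} [NeZero n]
    (hn : Even n) (c : Fin n) :
    ((cycleGraph n).adjMatrix R).AnticommutesSignedPerm (fun i => (-1) ^ (i : ℕ))
      (Equiv.addRight c) := fun i j => by
  simp only [adjMatrix_apply, Equiv.coe_addRight, cycleGraph_adj_add_right]
  split_ifs with h
  · rw [neg_one_pow_val_of_cycleGraph_adj hn h]; ring
  · ring

end SimpleGraph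

theorem Real.cos_nat_mod_two_mul_mul_pi_div (k m : ℕ) :
    cos (((m % (2 * k) : ℕ) : ℝ) * π / k) = cos (m * π / k) := by
  rcases Nat.eq_zero_or_pos k with rfl | hk
  · simp
  conv_rhs => rw [← Nat.mod_add_div m (2 * k)]
  have hk' : (k : ℝ) ≠ 0 := by positivity
  have : ((m % (2 * k) + 2 * k * (m / (2 * k)) : ℕ) : ℝ) * π / k
      = ((m % (2 * k) : ℕ) : ℝ) * π / k + ((m / (2 * k) : ℕ) : ℝ) * (2 * π) := by
    push_cast
    field_simp
  rw [this, cos_add_nat_mul_two_pi]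

/-- Harper's operator `A_k = M_k + M_k^* + L_k + L_k^*` in the basis `(ψ_ℓ)_{ℓ ∈ ℤ/2kℤ}`:
`M_k + M_k^*` is the diagonal `2 cos (ℓπ/k)`, and `L_k + L_k^*` the adjacency of the `2k`-cycle. -/
noncomputable def harperMatrix (k : ℕ) : Matrix (Fin (2 * k)) (Fin (2 * k)) ℝ :=
  diagonal (fun i : Fin (2 * k) => 2 * cos ((i : ℕ) * π / k)) + (cycleGraph (2 * k)).adjMatrix ℝ

theorem harperMatrix_apply (k : ℕ) [NeZero k] (i j : Fin (2 * k)) :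
    harperMatrix k i j =
      (if i = j then 2 * cos ((i : ℕ) * π / k) else 0) +
      (if (j : ℕ) = ((i : ℕ) + 1) % (2 * k) ∨ (i : ℕ) = ((j : ℕ) + 1) % (2 * k) then 1 else 0) := by
  have h2k : 1 < 2 * k := by have := NeZero.pos k; omega
  simp only [harperMatrix, Matrix.add_apply, diagonal_apply, adjMatrix_apply,
    cycleGraph_adj_iff_eq_add_one h2k, Fin.val_eq_val_add_one_mod_iff]

theorem harperMatrix_anticommutesSignedPerm (k : ℕ) [NeZero k] :
    (harperMatrix k).AnticommutesSignedPerm (fun i => (-1) ^ (i : ℕ))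
      (Equiv.addRight ⟨k, by have := NeZero.pos k; omega⟩) := by
  refine (anticommutesSignedPerm_diagonal fun i => ?_).add
    (anticommutesSignedPerm_adjMatrix_cycleGraph (even_two_mul k) _)
  have hk : (k : ℝ) ≠ 0 := NeZero.ne _
  have hshift : ((i : ℕ) + k : ℕ) * π / k = (i : ℕ) * π / k + π := by
    push_cast
    field_simp
  simp only [Equiv.coe_addRight, Fin.val_add, cos_nat_mod_two_mul_mul_pi_div, hshift, cos_add_pi]
  ring

/-- The spectrum of Harper's matrix (the `2k × 2k` tridiagonal matrix with corner
entries, diagonal `2cos(ℓπ/k)` and off-diagonal/corner entries `1`) is symmetric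
about `0`. -/
theorem stmt15 (k : ℕ) (hk : 0 < k) (A : Matrix (Fin (2 * k)) (Fin (2 * k)) ℝ)
    (hA : ∀ i j : Fin (2 * k), A i j =
      (if i = j then 2 * Real.cos ((i : ℕ) * Real.pi / k) else 0) +
      (if (j : ℕ) = ((i : ℕ) + 1) % (2 * k) ∨ (i : ℕ) = ((j : ℕ) + 1) % (2 * k)
        then 1 else 0))
    (lam : ℝ) (hlam : ∃ v : Fin (2 * k) → ℝ, v ≠ 0 ∧ A.mulVec v = lam • v) :
    ∃ w : Fin (2 * k) → ℝ, w ≠ 0 ∧ A.mulVec w = (-lam) • w := by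
  have : NeZero k := ⟨hk.ne'⟩
  obtain rfl : A = harperMatrix k := ext fun i j => (hA i j).trans (harperMatrix_apply k i j).symm
  exact (harperMatrix_anticommutesSignedPerm k).exists_mulVec_eq_neg_smul
    (fun i => pow_ne_zero _ (neg_ne_zero.mpr one_ne_zero)) hlam
end

section
/- Let ε_S, ε_N ∈ ℝ, θ₁, θ₂, θ₃ ∈ ℝ, and let T(ε) = exp(−iπ/4) 𝓔(ε) [[1, i e^{−πε}], [i e^{−πε}, 1]] where 𝓔(ε) = (2π)^{−1/2} Γ(1/2 + iε) e^{ε(π/2 − i ln k)} (so T(ε) is unitary). Define U = T(ε_S) · [[0, e^{−iθ₁}], [e^{−iθ₂}, 0]] · T(ε_N) · [[0, e^{−iθ₃}], [1, 0]]. Then U is unitary and its (1,1) entry a satisfies |a|² = (1 − 2cos(θ₂ − θ₁) e^{−π(ε_S + ε_N)} + e^{−2π(ε_S + ε_N)}) / ((1 + e^{−2πε_S})(1 + e^{−2πε_N})). -/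
/-!
By the reflection formula, `|Γ(1/2 + iε)|² = π / cosh(πε)`, so the prefactor `c(ε)` of `T(ε)`
has `|c(ε)|² = 1 / (1 + e^{−2πε})`; this is exactly what makes `c • [[1, iq], [iq, 1]]` with
`q = e^{−πε}` unitary, and the antidiagonal phase matrices are unitary, hence so is `U`.
Multiplying out, `U₀₀ = c(ε_S) c(ε_N) (e^{−iθ₁} − e^{−π(ε_S+ε_N)} e^{−iθ₂})`, whose squared modulus
is the stated quotient.
-/

open Complex
open scoped Real ComplexConjugate

theorem Complex.normSq_exp (z : ℂ) : normSq (exp z) = Real.exp (2 * z.re) := by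
  rw [← Complex.sq_norm, norm_exp, ← Real.exp_nat_mul]
  norm_num

theorem norm_exp_neg_I_mul_ofReal (θ : ℝ) : ‖exp (-I * θ)‖ = 1 := by
  rw [neg_mul, exp_neg, norm_inv, norm_exp_I_mul_ofReal, inv_one]

theorem exp_neg_pi_mul_sq (x : ℝ) : Real.exp (-π * x) ^ 2 = Real.exp (-2 * π * x) := by
  rw [← Real.exp_nat_mul]; ring_nf

theorem Complex.normSq_Gamma_one_half_add_mul_I (ε : ℝ) :
    normSq (Gamma (1 / 2 + ε * I)) = π / Real.cosh (π * ε) := by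
  set s : ℂ := 1 / 2 + ε * I
  have h_reflect : Gamma s * Gamma (1 - s) = π / sin (π * s) := Gamma_mul_Gamma_one_sub s
  have h_one_sub : 1 - s = conj s := by
    simp only [s, Complex.ext_iff]; norm_num
  have h_sin : sin (π * s) = Real.cosh (π * ε) := by
    rw [show (π : ℂ) * s = π / 2 + (π * ε : ℝ) * I by simp only [s]; push_cast; ring,
      sin_add, sin_pi_div_two, cos_pi_div_two, cos_mul_I, ofReal_cosh]
    ring
  rw [h_one_sub, Gamma_conj, mul_conj, h_sin, ← ofReal_div] at h_reflect
  exact_mod_cast h_reflect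

noncomputable def transferCoeff (k ε : ℝ) : ℂ :=
  exp (-(π / 4 : ℝ) * I) *
    ((((2 * π) ^ (-(1 : ℝ) / 2) : ℝ) : ℂ) * Gamma (1 / 2 + (ε : ℂ) * I) *
      exp ((ε : ℂ) * ((π / 2 : ℝ) - I * (Real.log k : ℂ))))

def transferShape (q : ℝ) : Matrix (Fin 2) (Fin 2) ℂ :=
  !![1, I * q; I * q, 1]

theorem normSq_transferCoeff (k ε : ℝ) :
    normSq (transferCoeff k ε) = (1 + Real.exp (-2 * π * ε))⁻¹ := by
  have h_prefactor : ((2 * π) ^ (-(1 : ℝ) / 2)) ^ 2 = (2 * π)⁻¹ := by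
    rw [← Real.rpow_natCast, ← Real.rpow_mul (by positivity)]
    norm_num [Real.rpow_neg_one]
  have h_phase : (-(π / 4 : ℝ) * I).re = 0 := by simp
  have h_growth : ((ε : ℂ) * ((π / 2 : ℝ) - I * (Real.log k : ℂ))).re = π * ε / 2 := by
    rw [re_ofReal_mul, sub_re, ofReal_re, mul_re, I_re, I_im, ofReal_re, ofReal_im]; ring
  have h_cosh : 2 * Real.cosh (π * ε) = Real.exp (π * ε) * (1 + Real.exp (-2 * π * ε)) := by
    rw [Real.cosh_eq, mul_add, ← Real.exp_add]; ring_nf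
  rw [transferCoeff, normSq_mul, normSq_mul, normSq_mul, normSq_exp, normSq_exp,
    normSq_Gamma_one_half_add_mul_I, normSq_ofReal, ← sq, h_prefactor, h_phase, h_growth]
  have h_cosh_ne : Real.cosh (π * ε) ≠ 0 := (Real.cosh_pos _).ne'
  field_simp
  rw [h_cosh, mul_zero, Real.exp_zero, one_mul, neg_mul, neg_mul]

theorem smul_transferShape_mem_unitaryGroup {c : ℂ} {q : ℝ} (h : normSq c * (1 + q ^ 2) = 1) :
    c • transferShape q ∈ Matrix.unitaryGroup (Fin 2) ℂ := by
  have h' : c * conj c * (1 + q * q) = 1 := by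
    rw [mul_conj, ← sq]; exact_mod_cast h
  rw [Matrix.mem_unitaryGroup_iff]
  ext i j
  fin_cases i <;> fin_cases j <;>
    simp [transferShape, Matrix.mul_apply, Matrix.star_eq_conjTranspose] <;>
    first
      | linear_combination h' - (c * conj c * q ^ 2) * I_mul_I
      | ring

theorem antidiag_mem_unitaryGroup {a b : ℂ} (ha : ‖a‖ = 1) (hb : ‖b‖ = 1) :
    !![0, a; b, 0] ∈ Matrix.unitaryGroup (Fin 2) ℂ := by
  replace ha : normSq a = 1 := by rw [← Complex.sq_norm, ha, one_pow]
  replace hb : normSq b = 1 := by rw [← Complex.sq_norm, hb, one_pow]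
  rw [Matrix.mem_unitaryGroup_iff]
  ext i j
  fin_cases i <;> fin_cases j <;>
    simp [Matrix.mul_apply, Matrix.star_eq_conjTranspose, mul_conj, ha, hb]

theorem smul_transferShape_mul_antidiag_mul_apply_zero_zero (cS cN a b d : ℂ) (qS qN : ℝ) :
    (cS • transferShape qS * !![0, a; b, 0] * (cN • transferShape qN) * !![0, d; 1, 0]) 0 0
      = cS * cN * (a - qS * qN * b) := by
  simp only [transferShape, Matrix.smul_of, Matrix.smul_cons, Matrix.smul_empty, smul_eq_mul,
    Matrix.mul_fin_two, Matrix.of_apply, Matrix.cons_val', Matrix.cons_val_zero, Matrix.empty_val',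
    Matrix.cons_val_fin_one]
  linear_combination (cS * cN * qS * qN * b) * I_mul_I

theorem normSq_exp_neg_I_mul_sub_ofReal_mul (θ₁ θ₂ r : ℝ) :
    normSq (exp (-I * θ₁) - r * exp (-I * θ₂)) = 1 - 2 * Real.cos (θ₂ - θ₁) * r + r ^ 2 := by
  have h_cross : exp (-I * θ₁) * conj (r * exp (-I * θ₂)) = r * exp ((θ₂ - θ₁ : ℝ) * I) := by
    rw [map_mul, ← exp_conj, conj_ofReal, ← mul_assoc, mul_comm _ (r : ℂ), mul_assoc, ← exp_add]
    congr 2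
    simp only [neg_mul, map_neg, map_mul, conj_I, conj_ofReal, neg_neg, ofReal_sub]; ring
  rw [normSq_sub, h_cross, normSq_mul, normSq_exp, normSq_exp, normSq_ofReal, re_ofReal_mul,
    exp_ofReal_mul_I_re]
  simp only [neg_mul, neg_re, mul_re, I_re, ofReal_re, zero_mul, I_im, ofReal_im, mul_zero, sub_self,
    neg_zero, Real.exp_zero, mul_one]
  ring

theorem transferCoeff_smul_transferShape_mem_unitaryGroup (k ε : ℝ) :
    transferCoeff k ε • transferShape (Real.exp (-π * ε)) ∈ Matrix.unitaryGroup (Fin 2) ℂ := by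
  refine smul_transferShape_mem_unitaryGroup ?_
  rw [normSq_transferCoeff, exp_neg_pi_mul_sq]
  exact inv_mul_cancel₀ (by positivity)

open Complex in
theorem stmt17_general (k : ℝ) (εS εN θ₁ θ₂ θ₃ : ℝ) :
    ∀ T : ℝ → Matrix (Fin 2) (Fin 2) ℂ,
    (∀ ε : ℝ, T ε =
      (Complex.exp (-(Real.pi / 4 : ℝ) * Complex.I) *
        ((((2 * Real.pi) ^ (-(1 : ℝ) / 2) : ℝ) : ℂ) *
          Complex.Gamma (1 / 2 + (ε : ℂ) * Complex.I) *
          Complex.exp ((ε : ℂ) * ((Real.pi / 2 : ℝ) - Complex.I * (Real.log k : ℂ))))) •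
      !![1, Complex.I * (Real.exp (-Real.pi * ε) : ℝ);
         Complex.I * (Real.exp (-Real.pi * ε) : ℝ), 1]) →
    ∀ U : Matrix (Fin 2) (Fin 2) ℂ,
    U = T εS * !![0, Complex.exp (-Complex.I * (θ₁ : ℂ));
                  Complex.exp (-Complex.I * (θ₂ : ℂ)), 0] *
        T εN * !![0, Complex.exp (-Complex.I * (θ₃ : ℂ)); 1, 0] →
    U ∈ Matrix.unitaryGroup (Fin 2) ℂ ∧
    ‖U 0 0‖ ^ 2 =
      (1 - 2 * Real.cos (θ₂ - θ₁) * Real.exp (-Real.pi * (εS + εN))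
          + Real.exp (-2 * Real.pi * (εS + εN))) /
        ((1 + Real.exp (-2 * Real.pi * εS)) * (1 + Real.exp (-2 * Real.pi * εN))) := by
  intro T hT U hU
  replace hT : ∀ ε, T ε = transferCoeff k ε • transferShape (Real.exp (-π * ε)) := hT
  subst hU
  rw [hT εS, hT εN]
  refine ⟨mul_mem (mul_mem (mul_mem ?_ ?_) ?_) ?_, ?_⟩
  · exact transferCoeff_smul_transferShape_mem_unitaryGroup k εS
  · exact antidiag_mem_unitaryGroup (norm_exp_neg_I_mul_ofReal θ₁) (norm_exp_neg_I_mul_ofReal θ₂)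
  · exact transferCoeff_smul_transferShape_mem_unitaryGroup k εN
  · exact antidiag_mem_unitaryGroup (norm_exp_neg_I_mul_ofReal θ₃) norm_one
  have h_exp_sum : Real.exp (-π * εS) * Real.exp (-π * εN) = Real.exp (-π * (εS + εN)) := by
    rw [← Real.exp_add, mul_add]
  rw [smul_transferShape_mul_antidiag_mul_apply_zero_zero, Complex.sq_norm, normSq_mul,
    normSq_mul, normSq_transferCoeff, normSq_transferCoeff, ← ofReal_mul, h_exp_sum,
    normSq_exp_neg_I_mul_sub_ofReal_mul, exp_neg_pi_mul_sq]
  field_simp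

open Complex in
/-- The monodromy matrix `U = T(ε_S)·[[0,e^{−iθ₁}],[e^{−iθ₂},0]]·T(ε_N)·[[0,e^{−iθ₃}],[1,0]]`
built from the hyperbolic transfer matrices is unitary, and its `(1,1)` entry `a` satisfies
`|a|² = (1 − 2cos(θ₂−θ₁)e^{−π(ε_S+ε_N)} + e^{−2π(ε_S+ε_N)}) /
((1+e^{−2πε_S})(1+e^{−2πε_N}))`. -/
theorem stmt17 (k : ℝ) (hk : 0 < k) (εS εN θ₁ θ₂ θ₃ : ℝ) :
    ∀ T : ℝ → Matrix (Fin 2) (Fin 2) ℂ,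
    (∀ ε : ℝ, T ε =
      (Complex.exp (-(Real.pi / 4 : ℝ) * Complex.I) *
        ((((2 * Real.pi) ^ (-(1 : ℝ) / 2) : ℝ) : ℂ) *
          Complex.Gamma (1 / 2 + (ε : ℂ) * Complex.I) *
          Complex.exp ((ε : ℂ) * ((Real.pi / 2 : ℝ) - Complex.I * (Real.log k : ℂ))))) •
      !![1, Complex.I * (Real.exp (-Real.pi * ε) : ℝ);
         Complex.I * (Real.exp (-Real.pi * ε) : ℝ), 1]) →
    ∀ U : Matrix (Fin 2) (Fin 2) ℂ,
    U = T εS * !![0, Complex.exp (-Complex.I * (θ₁ : ℂ));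
                  Complex.exp (-Complex.I * (θ₂ : ℂ)), 0] *
        T εN * !![0, Complex.exp (-Complex.I * (θ₃ : ℂ)); 1, 0] →
    U ∈ Matrix.unitaryGroup (Fin 2) ℂ ∧
    ‖U 0 0‖ ^ 2 =
      (1 - 2 * Real.cos (θ₂ - θ₁) * Real.exp (-Real.pi * (εS + εN))
          + Real.exp (-2 * Real.pi * (εS + εN))) /
        ((1 + Real.exp (-2 * Real.pi * εS)) * (1 + Real.exp (-2 * Real.pi * εN))) :=
  stmt17_general k εS εN θ₁ θ₂ θ₃
end
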